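/- (Whitney (b) implies (a)) Let X and Y be disjoint definable C^∞ submanifolds of ℝ^n and z ∈ Y ∩ cl(X). If the pair (X, Y) satisfies Whitney's condition (b) at z, then it satisfies Whitney's condition (a) at z, i.e. the angle ∠(T_z Y, T_x X) tends to 0 as x ∈ X tends to z. -/

import Mathlib

open Set Filter
open scoped ENNReal NNReal Topology

/-- The compactification map `h_n : ℝⁿ → (-1,1)ⁿ`. -/
noncomputable def compactify (n : ℕ) (x : EuclideanSpace ℝ (Fin n)) :
    EuclideanSpace ℝ (Fin n) :=
  WithLp.toLp 2 (fun i => x i / Real.sqrt (1 + ‖x‖ ^ 2))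

/-- A set is semianalytic if it is locally described by finitely many real-analytic
equalities and inequalities. -/
def IsSemianalytic {n : ℕ} (E : Set (EuclideanSpace ℝ (Fin n))) : Prop :=
  ∀ a : EuclideanSpace ℝ (Fin n),
    ∃ U : Set (EuclideanSpace ℝ (Fin n)), IsOpen U ∧ a ∈ U ∧
      ∃ (r : ℕ) (s : Fin r → ℕ)
        (f g : (i : Fin r) → Fin (s i) → EuclideanSpace ℝ (Fin n) → ℝ),
        (∀ i j, AnalyticOnNhd ℝ (f i j) U ∧ AnalyticOnNhd ℝ (g i j) U) ∧
        E ∩ U = ⋃ i : Fin r, ⋂ j : Fin (s i),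
          {x ∈ U | 0 < g i j x ∧ f i j x = 0}

/-- A set is globally semianalytic if its image under the compactification map
is semianalytic. -/
def IsGloballySemianalytic {n : ℕ} (Z : Set (EuclideanSpace ℝ (Fin n))) : Prop :=
  IsSemianalytic (compactify n '' Z)

/-- Projection onto the first `n` coordinates. -/
def projFirst (n p : ℕ) (x : EuclideanSpace ℝ (Fin (n + p))) :
    EuclideanSpace ℝ (Fin n) :=
  WithLp.toLp 2 (fun i => x (Fin.castAdd p i))

/-- Projection onto the last `p` coordinates. -/
def projLast (n p : ℕ) (x : EuclideanSpace ℝ (Fin (n + p))) :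
    EuclideanSpace ℝ (Fin p) :=
  WithLp.toLp 2 (fun i => x (Fin.natAdd n i))

/-- A set is globally subanalytic if it is the image of a globally semianalytic
set under a canonical linear projection. -/
def IsGloballySubanalytic {n : ℕ} (E : Set (EuclideanSpace ℝ (Fin n))) : Prop :=
  ∃ (p : ℕ) (Z : Set (EuclideanSpace ℝ (Fin (n + p)))),
    IsGloballySemianalytic Z ∧ E = projFirst n p '' Z

/-- A map defined on `A ⊆ ℝⁿ` (given as a total map, only its restriction to `A`
matters) is globally subanalytic if its graph over `A` is globally subanalytic. -/
def IsGloballySubanalyticMapOn {n k : ℕ} (A : Set (EuclideanSpace ℝ (Fin n)))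
    (F : EuclideanSpace ℝ (Fin n) → EuclideanSpace ℝ (Fin k)) : Prop :=
  IsGloballySubanalytic {y : EuclideanSpace ℝ (Fin (n + k)) |
    projFirst n k y ∈ A ∧ projLast n k y = F (projFirst n k y)}

/-- A real-valued function on `A ⊆ ℝⁿ` is globally subanalytic if its graph over
`A` is globally subanalytic. -/
def IsGloballySubanalyticFunOn {n : ℕ} (A : Set (EuclideanSpace ℝ (Fin n)))
    (f : EuclideanSpace ℝ (Fin n) → ℝ) : Prop :=
  IsGloballySubanalytic {y : EuclideanSpace ℝ (Fin (n + 1)) |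
    projFirst n 1 y ∈ A ∧ y (Fin.last n) = f (projFirst n 1 y)}

/-- `M` is a `C^∞` submanifold of `ℝⁿ`: near each of its points it is, after a
linear change of coordinates, the graph of a `C^∞` map `ℝᵏ → ℝ^{n-k}`. -/
def IsSmoothSubmanifold {n : ℕ} (M : Set (EuclideanSpace ℝ (Fin n))) : Prop :=
  ∀ x ∈ M, ∃ (k : ℕ) (L : EuclideanSpace ℝ (Fin n) ≃L[ℝ]
      (EuclideanSpace ℝ (Fin k) × EuclideanSpace ℝ (Fin (n - k))))
    (U : Set (EuclideanSpace ℝ (Fin n)))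
    (φ : EuclideanSpace ℝ (Fin k) → EuclideanSpace ℝ (Fin (n - k))),
    IsOpen U ∧ x ∈ U ∧ ContDiff ℝ (⊤ : ℕ∞) φ ∧
    M ∩ U = {y ∈ U | (L y).2 = φ (L y).1}

/-- The tangent space of `M` at `x` (as a set of vectors). -/
noncomputable def tangentSpaceAt {n : ℕ} (M : Set (EuclideanSpace ℝ (Fin n)))
    (x : EuclideanSpace ℝ (Fin n)) : Set (EuclideanSpace ℝ (Fin n)) :=
  (Submodule.span ℝ (tangentConeAt ℝ M x) : Submodule ℝ (EuclideanSpace ℝ (Fin n)))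

/-- The angle `∠(P, Q) = sup { d(u, Q) : u ∈ P, ‖u‖ ≤ 1 }` between two linear
subspaces (given as sets of vectors). -/
noncomputable def subspaceAngle {n : ℕ}
    (P Q : Set (EuclideanSpace ℝ (Fin n))) : ℝ :=
  sSup {r : ℝ | ∃ u ∈ P, ‖u‖ ≤ 1 ∧ r = Metric.infDist u Q}

section Aux
open Metric Asymptotics

variable {E : Type*} [NormedAddCommGroup E] [NormedSpace ℝ E]

lemma aux_le_infDist {s : Set E} (hs : s.Nonempty) {b : ℝ} {x : E}
    (h : ∀ y ∈ s, b ≤ dist x y) : b ≤ infDist x s := by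
  by_contra hlt
  push_neg at hlt
  obtain ⟨y, hy, hd⟩ := (infDist_lt_iff hs).1 hlt
  exact absurd (h y hy) (not_le.2 hd)

lemma infDist_smul_submodule (Q : Submodule ℝ E) {c : ℝ} (hc : c ≠ 0) (u : E) :
    infDist (c • u) (Q : Set E) = |c| * infDist u (Q : Set E) := by
  have hQ : (Q : Set E).Nonempty := ⟨0, Q.zero_mem⟩
  have habs : (0:ℝ) < |c| := abs_pos.2 hc
  apply le_antisymm
  · have h1 : infDist (c • u) (Q : Set E) / |c| ≤ infDist u (Q : Set E) := by
      refine aux_le_infDist hQ fun y hy => ?_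
      rw [div_le_iff₀ habs]
      calc infDist (c • u) (Q : Set E) ≤ dist (c • u) (c • y) :=
            infDist_le_dist_of_mem (Q.smul_mem c hy)
        _ = |c| * dist u y := by rw [dist_smul₀, Real.norm_eq_abs]
        _ = dist u y * |c| := mul_comm _ _
    calc infDist (c • u) (Q : Set E)
        = infDist (c • u) (Q : Set E) / |c| * |c| := by field_simp
      _ ≤ infDist u (Q : Set E) * |c| := by
          exact mul_le_mul_of_nonneg_right h1 habs.le
      _ = |c| * infDist u (Q : Set E) := mul_comm _ _
  · refine aux_le_infDist hQ fun y hy => ?_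
    have hy' : c⁻¹ • y ∈ Q := Q.smul_mem _ hy
    calc |c| * infDist u (Q : Set E) ≤ |c| * dist u (c⁻¹ • y) :=
          mul_le_mul_of_nonneg_left (infDist_le_dist_of_mem hy') habs.le
      _ = dist (c • u) (c • c⁻¹ • y) := by rw [dist_smul₀, Real.norm_eq_abs]
      _ = dist (c • u) y := by rw [smul_inv_smul₀ hc]

lemma infDist_neg_submodule (Q : Submodule ℝ E) (u : E) :
    infDist (-u) (Q : Set E) = infDist u (Q : Set E) := by
  have := infDist_smul_submodule Q (c := -1) (by norm_num) u
  simpa using this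


variable {E F G : Type*} [NormedAddCommGroup E] [NormedSpace ℝ E]
  [NormedAddCommGroup F] [NormedSpace ℝ F] [NormedAddCommGroup G] [NormedSpace ℝ G]

lemma tangentCone_eq_submodule_of_graph {M : Set E} {z : E}
    (L : E ≃L[ℝ] F × G) {U : Set E} {φ : F → G}
    (hU : IsOpen U) (hzU : z ∈ U) (hφ : ContDiff ℝ (⊤ : ℕ∞) φ)
    (hMU : M ∩ U = {y ∈ U | (L y).2 = φ (L y).1}) (hz : z ∈ M) :
    ∃ S : Submodule ℝ E, tangentConeAt ℝ M z = (S : Set E) := by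
  set a : F := (L z).1 with ha
  have hz2 : (L z).2 = φ a := by
    have hmem : z ∈ M ∩ U := ⟨hz, hzU⟩
    rw [hMU] at hmem
    exact hmem.2
  have hφdiff : Differentiable ℝ φ := hφ.differentiable (by simp)
  have hφd : HasFDerivAt φ (fderiv ℝ φ a) a := (hφdiff a).hasFDerivAt
  set D := fderiv ℝ φ a with hD
  refine ⟨(LinearMap.graph (D : F →ₗ[ℝ] G)).comap (L.toLinearEquiv : E →ₗ[ℝ] F × G), ?_⟩
  have memS : ∀ w : E, w ∈ (LinearMap.graph (D : F →ₗ[ℝ] G)).comap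
      (L.toLinearEquiv : E →ₗ[ℝ] F × G) ↔ (L w).2 = D (L w).1 := by
    intro w
    rw [Submodule.mem_comap, LinearMap.mem_graph_iff]
    rfl
  apply Subset.antisymm
  · -- cone ⊆ S
    rintro w hw
    obtain ⟨c, d, hc, hdM, hcd⟩ := mem_tangentConeAt_iff_exists_seq_norm_tendsto_atTop.1 hw
    have hd0 : Tendsto d atTop (𝓝 0) := tangentConeAt.lim_zero atTop hc hcd
    have hzd : Tendsto (fun n => z + d n) atTop (𝓝 z) := by
      simpa using tendsto_const_nhds.add hd0
    have hdU : ∀ᶠ n in atTop, z + d n ∈ U := hzd.eventually (hU.eventually_mem hzU)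
    set δ : ℕ → F × G := fun n => L (d n) with hδ
    have heq : ∀ᶠ n in atTop, (δ n).2 = φ (a + (δ n).1) - φ a := by
      filter_upwards [hdM, hdU] with n hM hUm
      have hmem : z + d n ∈ M ∩ U := ⟨hM, hUm⟩
      rw [hMU] at hmem
      have h2 := hmem.2
      have hL : L (z + d n) = L z + δ n := by rw [map_add]
      rw [hL] at h2
      have h2' : (L z).2 + (δ n).2 = φ ((L z).1 + (δ n).1) := h2
      rw [hz2] at h2'
      have h3 : φ a + (δ n).2 = φ (a + (δ n).1) := h2'
      linear_combination (norm := abel) h3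
    have hδ0 : Tendsto δ atTop (𝓝 0) := by
      have := (L.continuous.tendsto 0).comp hd0
      simpa [hδ, Function.comp_def] using this
    have hcδ : Tendsto (fun n => c n • δ n) atTop (𝓝 (L w)) := by
      have h0 := (L.continuous.tendsto w).comp hcd
      refine h0.congr fun n => ?_
      show L (c n • d n) = c n • δ n
      rw [map_smul]
    set h : ℕ → F := fun n => (δ n).1 with hh
    have hh0 : Tendsto h atTop (𝓝 0) := by
      have := (continuous_fst.tendsto (0 : F × G)).comp hδ0
      simpa [hh, Function.comp_def] using this
    have hch : Tendsto (fun n => c n • h n) atTop (𝓝 (L w).1) := by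
      have := (continuous_fst.tendsto (L w)).comp hcδ
      simpa [hh, Function.comp_def] using this
    have hcδ2 : Tendsto (fun n => c n • (δ n).2) atTop (𝓝 (L w).2) := by
      have := (continuous_snd.tendsto (L w)).comp hcδ
      simpa [Function.comp_def] using this
    set g : ℕ → G := fun n => φ (a + h n) - φ a - D (h n) with hg
    have hlo : g =o[atTop] h := by
      have h1 : (fun x => φ x - φ a - D (x - a)) =o[𝓝 a] fun x => x - a :=
        hφd.isLittleO
      have h2 : Tendsto (fun n => a + h n) atTop (𝓝 a) := by
        simpa using tendsto_const_nhds.add hh0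
      have h3 := h1.comp_tendsto h2
      refine h3.congr' (Eventually.of_forall fun n => ?_) (Eventually.of_forall fun n => ?_)
      · show φ (a + h n) - φ a - D (a + h n - a) = g n
        rw [add_sub_cancel_left]
      · show a + h n - a = h n
        rw [add_sub_cancel_left]
    have hcg : Tendsto (fun n => c n • g n) atTop (𝓝 0) := by
      have h1 : (fun n => c n • g n) =o[atTop] fun n => c n • h n :=
        (isBigO_refl c atTop).smul_isLittleO hlo
      have h2 : (fun n => c n • h n) =O[atTop] (fun _ => (1:ℝ)) := hch.isBigO_one ℝ
      exact (isLittleO_one_iff _).1 (h1.trans_isBigO h2)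
    have hcδ2' : Tendsto (fun n => c n • (δ n).2) atTop (𝓝 (D (L w).1)) := by
      have hDlim : Tendsto (fun n => D (c n • h n)) atTop (𝓝 (D (L w).1)) :=
        (D.continuous.tendsto _).comp hch
      have hsum : Tendsto (fun n => D (c n • h n) + c n • g n) atTop
          (𝓝 (D (L w).1 + 0)) := hDlim.add hcg
      rw [add_zero] at hsum
      refine hsum.congr' ?_
      filter_upwards [heq] with n hn
      have hgn : g n = φ (a + h n) - φ a - D (h n) := rfl
      have hδ2 : (δ n).2 = φ (a + h n) - φ a := hn
      rw [map_smul, hgn, hδ2]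
      module
    have : (L w).2 = D (L w).1 := tendsto_nhds_unique hcδ2 hcδ2'
    exact (memS w).2 this
  · -- S ⊆ cone
    intro w hw
    have hw' : (L w).2 = D (L w).1 := (memS w).1 hw
    set h : F := (L w).1 with hh
    set c : ℕ → ℝ := fun n => (n : ℝ) + 1 with hc
    have hcn : ∀ n, c n ≠ 0 := fun n => by positivity
    have hcat : Tendsto c atTop atTop :=
      tendsto_atTop_add_const_right atTop 1 tendsto_natCast_atTop_atTop
    have hcnorm : Tendsto (fun n => ‖c n‖) atTop atTop := by
      refine hcat.congr fun n => ?_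
      rw [Real.norm_eq_abs, abs_of_pos (by positivity)]
    set d : ℕ → E := fun n => L.symm ((c n)⁻¹ • h, φ (a + (c n)⁻¹ • h) - φ a) with hd
    have htinv : Tendsto (fun n => (c n)⁻¹) atTop (𝓝 0) := tendsto_inv_atTop_zero.comp hcat
    have hth : Tendsto (fun n => (c n)⁻¹ • h) atTop (𝓝 0) := by
      simpa using htinv.smul_const h
    have hath : Tendsto (fun n => a + (c n)⁻¹ • h) atTop (𝓝 a) := by
      simpa using tendsto_const_nhds.add hth
    have hφt : Tendsto (fun n => φ (a + (c n)⁻¹ • h) - φ a) atTop (𝓝 0) := by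
      have := ((hφ.continuous.tendsto a).comp hath).sub
        (tendsto_const_nhds (x := φ a) (f := atTop))
      simpa [Function.comp] using this
    have hd0 : Tendsto d atTop (𝓝 0) := by
      have hpair : Tendsto (fun n => (((c n)⁻¹ • h : F),
          (φ (a + (c n)⁻¹ • h) - φ a : G))) atTop (𝓝 ((0 : F), (0 : G))) :=
        hth.prodMk_nhds hφt
      have := (L.symm.continuous.tendsto _).comp hpair
      rw [Prod.mk_zero_zero, map_zero] at this
      simpa [hd, Function.comp_def] using this
    have hzd : Tendsto (fun n => z + d n) atTop (𝓝 z) := by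
      simpa using tendsto_const_nhds.add hd0
    have hdU : ∀ᶠ n in atTop, z + d n ∈ U := hzd.eventually (hU.eventually_mem hzU)
    refine mem_tangentConeAt_iff_exists_seq_norm_tendsto_atTop.2 ⟨c, d, hcnorm, ?_, ?_⟩
    · filter_upwards [hdU] with n hn
      have hLzd : L (z + d n) = (a + (c n)⁻¹ • h, φ (a + (c n)⁻¹ • h)) := by
        rw [map_add, hd]
        simp only [L.apply_symm_apply]
        ext
        · rfl
        · show (L z).2 + (φ (a + (c n)⁻¹ • h) - φ a) = φ (a + (c n)⁻¹ • h)
          rw [hz2]; abel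
      have hmem : z + d n ∈ M ∩ U := by
        rw [hMU]
        exact ⟨hn, by rw [hLzd]⟩
      exact hmem.1
    · have hkey : ∀ n, c n • d n = L.symm (h, c n • (φ (a + (c n)⁻¹ • h) - φ a)) := by
        intro n
        rw [hd]
        simp only [← map_smul]
        congr 1
        ext
        · show c n • ((c n)⁻¹ • h) = h
          rw [smul_inv_smul₀ (hcn n)]
        · rfl
      have hlim : Tendsto (fun n => c n • (φ (a + (c n)⁻¹ • h) - φ a)) atTop (𝓝 (D h)) :=
        hφd.lim h hcnorm
      have hpair : Tendsto (fun n => ((h : F), c n • (φ (a + (c n)⁻¹ • h) - φ a))) atTop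
          (𝓝 (h, D h)) := tendsto_const_nhds.prodMk_nhds hlim
      have hfin : Tendsto (fun n => c n • d n) atTop (𝓝 (L.symm (h, D h))) := by
        have h2 := (L.symm.continuous.tendsto _).comp hpair
        refine h2.congr fun n => ?_
        rw [hkey n]
        rfl
      have hLw : L.symm (h, D h) = w := by
        have hp : ((h : F), D h) = L w := by
          ext
          · rfl
          · exact hw'.symm
        rw [hp, L.symm_apply_apply]
      rwa [hLw] at hfin

end Aux

set_option maxHeartbeats 2000000 in
/-- Whitney's condition (b) implies condition (a): if `X`, `Y` are disjoint
globally subanalytic `C^∞` submanifolds of `ℝⁿ`, `z ∈ Y ∩ cl X`, and `(X, Y)`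
satisfies Whitney's condition (b) at `z` (phrased with sequences: for all sequences
`x_k ∈ X`, `y_k ∈ Y` converging to `z` whose unit secant vectors converge to `v`,
the distance from `v` to `T_{x_k} X` tends to `0`), then the angle
`∠(T_z Y, T_x X)` tends to `0` as `x ∈ X` tends to `z`. -/


theorem whitney_b_implies_a {n : ℕ} (X Y : Set (EuclideanSpace ℝ (Fin n)))
    (hXY : Disjoint X Y)
    (hXdef : IsGloballySubanalytic X) (hYdef : IsGloballySubanalytic Y)
    (hXman : IsSmoothSubmanifold X) (hYman : IsSmoothSubmanifold Y)
    (z : EuclideanSpace ℝ (Fin n)) (hz : z ∈ Y ∩ closure X)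
    (hb : ∀ (x y : ℕ → EuclideanSpace ℝ (Fin n)) (v : EuclideanSpace ℝ (Fin n)),
      (∀ j, x j ∈ X) → (∀ j, y j ∈ Y) → (∀ j, x j ≠ y j) →
      Filter.Tendsto x Filter.atTop (nhds z) →
      Filter.Tendsto y Filter.atTop (nhds z) →
      Filter.Tendsto (fun j => ‖x j - y j‖⁻¹ • (x j - y j)) Filter.atTop (nhds v) →
      Filter.Tendsto (fun j => Metric.infDist v (tangentSpaceAt X (x j)))
        Filter.atTop (nhds 0)) :
    Filter.Tendsto (fun x => subspaceAngle (tangentSpaceAt Y z) (tangentSpaceAt X x))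
      (nhdsWithin z X) (nhds 0) := by
  
  classical
  set TY : Set (EuclideanSpace ℝ (Fin n)) := tangentSpaceAt Y z with hTY
  have hzY : z ∈ Y := hz.1
  have hT0 : ∀ p, (0 : EuclideanSpace ℝ (Fin n)) ∈ tangentSpaceAt X p := fun p =>
    (Submodule.span ℝ (tangentConeAt ℝ X p)).zero_mem
  have hTY0 : (0 : EuclideanSpace ℝ (Fin n)) ∈ TY :=
    (Submodule.span ℝ (tangentConeAt ℝ Y z)).zero_mem
  have hmem0 : ∀ p, (0 : ℝ) ∈ {r : ℝ | ∃ u ∈ TY, ‖u‖ ≤ 1 ∧ r = Metric.infDist u (tangentSpaceAt X p)} :=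
    fun p => ⟨0, hTY0, by simp, (Metric.infDist_zero_of_mem (hT0 p)).symm⟩
  have hbdd : ∀ p, BddAbove {r : ℝ | ∃ u ∈ TY, ‖u‖ ≤ 1 ∧ r = Metric.infDist u (tangentSpaceAt X p)} := by
    intro p
    refine ⟨1, ?_⟩
    rintro r ⟨u, hu, hu1, rfl⟩
    calc Metric.infDist u (tangentSpaceAt X p) ≤ dist u 0 :=
          Metric.infDist_le_dist_of_mem (hT0 p)
      _ = ‖u‖ := by simp
      _ ≤ 1 := hu1
  have hang_nonneg : ∀ p, 0 ≤ subspaceAngle TY (tangentSpaceAt X p) := fun p =>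
    le_csSup (hbdd p) (hmem0 p)
  rw [Filter.tendsto_iff_seq_tendsto]
  intro x0 hx0
  rw [tendsto_nhdsWithin_iff] at hx0
  obtain ⟨hx0z, hx0X⟩ := hx0
  by_contra hcon
  rw [Metric.tendsto_atTop] at hcon
  push_neg at hcon
  obtain ⟨ε, hε, hfreq⟩ := hcon
  have hfreq' : ∃ᶠ j in atTop, ε ≤ subspaceAngle TY (tangentSpaceAt X (x0 j)) := by
    rw [Filter.frequently_atTop]
    intro N
    obtain ⟨j, hjN, hj⟩ := hfreq N
    refine ⟨j, hjN, ?_⟩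
    rwa [Function.comp_apply, Real.dist_0_eq_abs, abs_of_nonneg (hang_nonneg _)] at hj
  obtain ⟨φ₀, hφ₀, hx1⟩ := Filter.extraction_of_frequently_atTop (hfreq'.and_eventually hx0X)
  set x1 : ℕ → EuclideanSpace ℝ (Fin n) := x0 ∘ φ₀ with hx1def
  have hx1z : Tendsto x1 atTop (𝓝 z) := hx0z.comp hφ₀.tendsto_atTop
  have hx1X : ∀ j, x1 j ∈ X := fun j => (hx1 j).2
  have hsel : ∀ j, ∃ u, u ∈ TY ∧ ‖u‖ ≤ 1 ∧ ε / 2 < Metric.infDist u (tangentSpaceAt X (x1 j)) := by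
    intro j
    have h1 : ε / 2 < sSup {r : ℝ | ∃ u ∈ TY, ‖u‖ ≤ 1 ∧ r = Metric.infDist u (tangentSpaceAt X (x1 j))} :=
      lt_of_lt_of_le (by linarith) (hx1 j).1
    obtain ⟨r, hrmem, hr⟩ := exists_lt_of_lt_csSup ⟨0, hmem0 _⟩ h1
    obtain ⟨u, hu, hu1, rfl⟩ := hrmem
    exact ⟨u, hu, hu1, hr⟩
  choose u huY hu1 hud using hsel
  obtain ⟨uLim, huLimball, ψ, hψ, hψlim⟩ :=
    (isCompact_closedBall (0 : EuclideanSpace ℝ (Fin n)) 1).tendsto_subseq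
      (fun j => mem_closedBall_zero_iff.2 (hu1 j))
  have huLim1 : ‖uLim‖ ≤ 1 := mem_closedBall_zero_iff.1 huLimball
  have hTYclosed : IsClosed TY :=
    (Submodule.span ℝ (tangentConeAt ℝ Y z)).closed_of_finiteDimensional
  have huLimY : uLim ∈ TY :=
    hTYclosed.mem_of_tendsto hψlim (Eventually.of_forall fun j => huY _)
  obtain ⟨N, hN⟩ := Metric.tendsto_atTop.1 hψlim (ε / 6) (by linarith)
  have huLimd : ∀ j, N ≤ j → ε / 3 ≤ Metric.infDist uLim (tangentSpaceAt X (x1 (ψ j))) := by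
    intro j hj
    have h1 : Metric.infDist (u (ψ j)) (tangentSpaceAt X (x1 (ψ j))) ≤
        Metric.infDist uLim (tangentSpaceAt X (x1 (ψ j))) + dist (u (ψ j)) uLim :=
      Metric.infDist_le_infDist_add_dist
    have h2 := hud (ψ j)
    have h3 : dist ((u ∘ ψ) j) uLim < ε / 6 := hN j hj
    have h4 : dist ((u ∘ ψ) j) uLim = dist (u (ψ j)) uLim := rfl
    rw [h4] at h3
    linarith
  have huLimne : uLim ≠ 0 := by
    intro h0
    have := huLimd N le_rfl
    rw [h0, Metric.infDist_zero_of_mem (hT0 _)] at this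
    linarith
  have huLimpos : 0 < ‖uLim‖ := norm_pos_iff.2 huLimne
  set v : EuclideanSpace ℝ (Fin n) := ‖uLim‖⁻¹ • uLim with hv
  have hvY : v ∈ TY := (Submodule.span ℝ (tangentConeAt ℝ Y z)).smul_mem _ huLimY
  have hvnorm : ‖v‖ = 1 := by
    rw [hv, norm_smul, norm_inv, norm_norm, inv_mul_cancel₀ (ne_of_gt huLimpos)]
  set x2 : ℕ → EuclideanSpace ℝ (Fin n) := fun j => x1 (ψ (N + j)) with hx2def
  have hx2X : ∀ j, x2 j ∈ X := fun j => hx1X _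
  have hx2z : Tendsto x2 atTop (𝓝 z) := by
    have h1 : Tendsto (fun j => N + j) atTop atTop :=
      tendsto_atTop_mono (fun j => Nat.le_add_left j N) tendsto_id
    exact (hx1z.comp hψ.tendsto_atTop).comp h1
  have hx2d : ∀ j, ε / 3 ≤ Metric.infDist v (tangentSpaceAt X (x2 j)) := by
    intro j
    have h1 := huLimd (N + j) (Nat.le_add_right N j)
    have h2 : Metric.infDist v (tangentSpaceAt X (x2 j)) =
        |(‖uLim‖⁻¹ : ℝ)| * Metric.infDist uLim (tangentSpaceAt X (x2 j)) :=
      infDist_smul_submodule _ (inv_ne_zero (ne_of_gt huLimpos)) uLim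
    have h3 : (1 : ℝ) ≤ |(‖uLim‖⁻¹ : ℝ)| := by
      rw [abs_of_pos (inv_pos.2 huLimpos)]
      exact one_le_inv_iff₀.2 ⟨huLimpos, huLim1⟩
    calc ε / 3 ≤ Metric.infDist uLim (tangentSpaceAt X (x2 j)) := h1
      _ = 1 * Metric.infDist uLim (tangentSpaceAt X (x2 j)) := (one_mul _).symm
      _ ≤ |(‖uLim‖⁻¹ : ℝ)| * Metric.infDist uLim (tangentSpaceAt X (x2 j)) :=
          mul_le_mul_of_nonneg_right h3 Metric.infDist_nonneg
      _ = Metric.infDist v (tangentSpaceAt X (x2 j)) := h2.symm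
  have hvC : v ∈ tangentConeAt ℝ Y z := by
    obtain ⟨k, L, U, φ, hU, hzU, hφ, hYU⟩ := hYman z hzY
    obtain ⟨S, hS⟩ := tangentCone_eq_submodule_of_graph L hU hzU hφ hYU hzY
    have heq : TY = tangentConeAt ℝ Y z := by
      show ((Submodule.span ℝ (tangentConeAt ℝ Y z) : Submodule ℝ
        (EuclideanSpace ℝ (Fin n))) : Set (EuclideanSpace ℝ (Fin n))) = tangentConeAt ℝ Y z
      rw [hS, Submodule.span_eq]
    rw [← heq]
    exact hvY
  obtain ⟨c, d, hc, hdY, hcd⟩ := mem_tangentConeAt_iff_exists_seq_norm_tendsto_atTop.1 hvC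
  have hd0 : Tendsto d atTop (𝓝 0) := tangentConeAt.lim_zero atTop hc hcd
  have hcdnorm : Tendsto (fun i => ‖c i • d i‖) atTop (𝓝 1) := by
    have := hcd.norm
    rwa [hvnorm] at this
  have hdne : ∀ᶠ i in atTop, d i ≠ 0 := by
    filter_upwards [hcdnorm.eventually (lt_mem_nhds (by norm_num : (1:ℝ)/2 < 1))] with i hi
    intro h0
    rw [h0, smul_zero, norm_zero] at hi
    linarith
  have hcne : ∀ᶠ i in atTop, c i ≠ 0 := by
    filter_upwards [hc.eventually_ge_atTop 1] with i hi
    intro h0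
    rw [h0, norm_zero] at hi
    linarith
  have hYseq : ∃ (y : ℕ → EuclideanSpace ℝ (Fin n)) (w : EuclideanSpace ℝ (Fin n)),
      (∀ j, y j ∈ Y) ∧ (∀ j, y j ≠ z) ∧ Tendsto y atTop (𝓝 z) ∧
      Tendsto (fun j => ‖y j - z‖⁻¹ • (y j - z)) atTop (𝓝 w) ∧ (w = v ∨ w = -v) := by
    by_cases hsign : ∃ᶠ i in atTop, 0 < c i
    · obtain ⟨φ₁, hφ₁, hP⟩ := Filter.extraction_of_frequently_atTop
        (hsign.and_eventually (hdY.and hdne))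
      refine ⟨fun j => z + d (φ₁ j), v, fun j => (hP j).2.1, ?_, ?_, ?_, Or.inl rfl⟩
      · intro j h0
        apply (hP j).2.2
        have := congrArg (· - z) h0
        simpa using this
      · have := hd0.comp hφ₁.tendsto_atTop
        have h2 : Tendsto (fun j => z + d (φ₁ j)) atTop (𝓝 (z + 0)) :=
          tendsto_const_nhds.add this
        simpa using h2
      · have hkey : ∀ j, ‖(z + d (φ₁ j)) - z‖⁻¹ • ((z + d (φ₁ j)) - z) =
            ‖c (φ₁ j) • d (φ₁ j)‖⁻¹ • (c (φ₁ j) • d (φ₁ j)) := by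
          intro j
          have hpos := (hP j).1
          have hdnz : ‖d (φ₁ j)‖ ≠ 0 := norm_ne_zero_iff.2 (hP j).2.2
          have hsimp : (z + d (φ₁ j)) - z = d (φ₁ j) := by abel
          rw [hsimp, norm_smul, Real.norm_eq_abs, abs_of_pos hpos, smul_smul]
          congr 1
          field_simp
        have hlim : Tendsto (fun j => ‖c (φ₁ j) • d (φ₁ j)‖⁻¹ • (c (φ₁ j) • d (φ₁ j)))
            atTop (𝓝 ((1:ℝ)⁻¹ • v)) :=
          Tendsto.smul ((hcdnorm.comp hφ₁.tendsto_atTop).inv₀ one_ne_zero)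
            (hcd.comp hφ₁.tendsto_atTop)
        rw [inv_one, one_smul] at hlim
        exact hlim.congr fun j => (hkey j).symm
    · have hneg : ∀ᶠ i in atTop, c i < 0 := by
        rw [Filter.not_frequently] at hsign
        filter_upwards [hsign, hcne] with i h1 h2
        rcases lt_trichotomy (c i) 0 with h | h | h
        · exact h
        · exact absurd h h2
        · exact absurd h h1
      obtain ⟨φ₁, hφ₁, hP⟩ := Filter.extraction_of_frequently_atTop
        ((hneg.and (hdY.and hdne)).frequently)
      refine ⟨fun j => z + d (φ₁ j), -v, fun j => (hP j).2.1, ?_, ?_, ?_, Or.inr rfl⟩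
      · intro j h0
        apply (hP j).2.2
        have := congrArg (· - z) h0
        simpa using this
      · have := hd0.comp hφ₁.tendsto_atTop
        have h2 : Tendsto (fun j => z + d (φ₁ j)) atTop (𝓝 (z + 0)) :=
          tendsto_const_nhds.add this
        simpa using h2
      · have hkey : ∀ j, ‖(z + d (φ₁ j)) - z‖⁻¹ • ((z + d (φ₁ j)) - z) =
            -(‖c (φ₁ j) • d (φ₁ j)‖⁻¹ • (c (φ₁ j) • d (φ₁ j))) := by
          intro j
          have hneg' := (hP j).1
          have hdnz : ‖d (φ₁ j)‖ ≠ 0 := norm_ne_zero_iff.2 (hP j).2.2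
          have hcnz : c (φ₁ j) ≠ 0 := ne_of_lt hneg'
          have hsimp : (z + d (φ₁ j)) - z = d (φ₁ j) := by abel
          rw [hsimp, norm_smul, Real.norm_eq_abs, abs_of_neg hneg', ← neg_smul, smul_smul]
          congr 1
          field_simp
        have hlim : Tendsto (fun j => -(‖c (φ₁ j) • d (φ₁ j)‖⁻¹ • (c (φ₁ j) • d (φ₁ j))))
            atTop (𝓝 (-((1:ℝ)⁻¹ • v))) :=
          (Tendsto.smul ((hcdnorm.comp hφ₁.tendsto_atTop).inv₀ one_ne_zero)
            (hcd.comp hφ₁.tendsto_atTop)).neg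
        rw [inv_one, one_smul] at hlim
        exact hlim.congr fun j => (hkey j).symm
  obtain ⟨y, w, hyY, hyne, hyz, hydir, hw⟩ := hYseq
  set v' : EuclideanSpace ℝ (Fin n) := -w with hv'
  have hv'd : ∀ j, ε / 3 ≤ Metric.infDist v' (tangentSpaceAt X (x2 j)) := by
    intro j
    rcases hw with h | h
    · calc ε / 3 ≤ Metric.infDist v (tangentSpaceAt X (x2 j)) := hx2d j
        _ = Metric.infDist (-v) (tangentSpaceAt X (x2 j)) :=
            (infDist_neg_submodule (Submodule.span ℝ (tangentConeAt ℝ X (x2 j))) v).symm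
        _ = Metric.infDist v' (tangentSpaceAt X (x2 j)) := by rw [hv', h]
    · calc ε / 3 ≤ Metric.infDist v (tangentSpaceAt X (x2 j)) := hx2d j
        _ = Metric.infDist v' (tangentSpaceAt X (x2 j)) := by rw [hv', h, neg_neg]
  have hbne : ∀ j, (0:ℝ) < ‖y j - z‖ := fun j => by
    rw [norm_pos_iff]
    exact sub_ne_zero.2 (hyne j)
  have hex : ∀ j : ℕ, ∃ i, j ≤ i ∧ ‖x2 i - z‖ < ‖y j - z‖ / (j + 1) := by
    intro j
    have hnorm : Tendsto (fun i => ‖x2 i - z‖) atTop (𝓝 0) := by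
      have := (hx2z.sub_const z).norm
      simpa using this
    obtain ⟨M, hM⟩ := Metric.tendsto_atTop.1 hnorm (‖y j - z‖ / (j + 1))
      (div_pos (hbne j) (by positivity))
    refine ⟨max j M, le_max_left _ _, ?_⟩
    have := hM (max j M) (le_max_right _ _)
    rwa [Real.dist_0_eq_abs, abs_of_nonneg (norm_nonneg _)] at this
  choose msel hm1 hm2 using hex
  set Xs : ℕ → EuclideanSpace ℝ (Fin n) := fun j => x2 (msel j) with hXs
  have hXsX : ∀ j, Xs j ∈ X := fun j => hx2X _
  have hXsz : Tendsto Xs atTop (𝓝 z) := hx2z.comp (tendsto_atTop_mono hm1 tendsto_id)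
  have hne' : ∀ j, Xs j ≠ y j := fun j h =>
    Set.disjoint_left.1 hXY (hXsX j) (h ▸ hyY j)
  have hsecant : Tendsto (fun j => ‖Xs j - y j‖⁻¹ • (Xs j - y j)) atTop (𝓝 v') := by
    have hab : ∀ j, Xs j - y j = (Xs j - z) - (y j - z) := by intro j; abel
    have hA : ∀ j, ‖Xs j - z‖ < ‖y j - z‖ / (j + 1) := fun j => hm2 j
    have hRlb : ∀ j, ‖y j - z‖ - ‖Xs j - z‖ ≤ ‖Xs j - y j‖ := by
      intro j
      have h3 := norm_sub_norm_le (y j - z) (Xs j - z)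
      have h4 : ‖(y j - z) - (Xs j - z)‖ = ‖Xs j - y j‖ := by
        rw [hab j, norm_sub_rev]
      linarith
    have hR : ∀ j, (0:ℝ) < ‖Xs j - y j‖ := fun j => by
      rw [norm_pos_iff]
      exact sub_ne_zero.2 (hne' j)
    have hbound : ∀ᶠ j in atTop, ‖(‖Xs j - y j‖⁻¹ • (Xs j - y j)) +
        ‖y j - z‖⁻¹ • (y j - z)‖ ≤ 4 / (j + 1) := by
      filter_upwards [Filter.eventually_ge_atTop 1] with j hj
      set A := ‖Xs j - z‖ with hAdef
      set B := ‖y j - z‖ with hBdef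
      set R := ‖Xs j - y j‖ with hRdef
      have hBpos : (0:ℝ) < B := hbne j
      have hApos : (0:ℝ) ≤ A := norm_nonneg _
      have hj1 : (2:ℝ) ≤ (j:ℝ) + 1 := by
        have : (1:ℝ) ≤ (j:ℝ) := by exact_mod_cast hj
        linarith
      have hjpos : (0:ℝ) < (j:ℝ) + 1 := by linarith
      have hAle : A ≤ B / 2 := by
        have h1 : A < B / ((j:ℝ)+1) := hA j
        have h2 : B / ((j:ℝ)+1) ≤ B / 2 :=
          div_le_div_of_nonneg_left hBpos.le (by norm_num) hj1
        linarith
      have hRge : B / 2 ≤ R := by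
        have := hRlb j
        linarith
      have hRpos : (0:ℝ) < R := lt_of_lt_of_le (by linarith) hRge
      have hBne : B ≠ 0 := ne_of_gt hBpos
      have hRne : R ≠ 0 := ne_of_gt hRpos
      have hjne : ((j:ℝ) + 1) ≠ 0 := ne_of_gt hjpos
      have hRB : |R - B| ≤ A := by
        have h1 := abs_norm_sub_norm_le (Xs j - y j) (z - y j)
        have h2 : (Xs j - y j) - (z - y j) = Xs j - z := by abel
        have h3 : ‖z - y j‖ = B := by rw [norm_sub_rev]
        rw [h2] at h1
        rw [← hRdef, h3, ← hAdef] at h1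
        exact h1
      have hsplit : (‖Xs j - y j‖⁻¹ • (Xs j - y j)) + ‖y j - z‖⁻¹ • (y j - z) =
          R⁻¹ • (Xs j - z) + (B⁻¹ - R⁻¹) • (y j - z) := by
        rw [← hRdef, ← hBdef, hab j]
        module
      rw [hsplit]
      have hn1 : ‖R⁻¹ • (Xs j - z)‖ = R⁻¹ * A := by
        rw [norm_smul, Real.norm_eq_abs, abs_of_pos (inv_pos.2 hRpos)]
      have hn2 : ‖(B⁻¹ - R⁻¹) • (y j - z)‖ = |B⁻¹ - R⁻¹| * B := by
        rw [norm_smul, Real.norm_eq_abs]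
      have hd1 : |B⁻¹ - R⁻¹| ≤ A / (R * B) := by
        have he : B⁻¹ - R⁻¹ = (R - B) / (R * B) := by
          field_simp
        rw [he, abs_div, abs_of_pos (by positivity : (0:ℝ) < R * B)]
        exact div_le_div_of_nonneg_right hRB (by positivity) |>.trans_eq rfl
      calc ‖R⁻¹ • (Xs j - z) + (B⁻¹ - R⁻¹) • (y j - z)‖
          ≤ ‖R⁻¹ • (Xs j - z)‖ + ‖(B⁻¹ - R⁻¹) • (y j - z)‖ := norm_add_le _ _
        _ = R⁻¹ * A + |B⁻¹ - R⁻¹| * B := by rw [hn1, hn2]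
        _ ≤ R⁻¹ * A + (A / (R * B)) * B :=
            add_le_add_right (mul_le_mul_of_nonneg_right hd1 hBpos.le) _
        _ = 2 * (A / R) := by field_simp; ring
        _ ≤ 2 * ((B / ((j:ℝ)+1)) / (B / 2)) := by
            have hdd : A / R ≤ (B / ((j:ℝ)+1)) / (B / 2) := by
              apply div_le_div₀ (by positivity) (le_of_lt (hA j)) (by linarith) hRge
            linarith
        _ = 4 / ((j:ℝ)+1) := by field_simp; ring
    have hzero : Tendsto (fun j => (‖Xs j - y j‖⁻¹ • (Xs j - y j)) +
        ‖y j - z‖⁻¹ • (y j - z)) atTop (𝓝 0) := by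
      refine squeeze_zero_norm' hbound ?_
      have h0 := tendsto_one_div_add_atTop_nhds_zero_nat.const_mul (4:ℝ)
      rw [mul_zero] at h0
      refine h0.congr fun j => ?_
      ring
    have hfinal : Tendsto (fun j => ((‖Xs j - y j‖⁻¹ • (Xs j - y j)) +
        ‖y j - z‖⁻¹ • (y j - z)) - ‖y j - z‖⁻¹ • (y j - z)) atTop (𝓝 (0 - w)) :=
      hzero.sub hydir
    rw [zero_sub] at hfinal
    refine hfinal.congr fun j => ?_
    abel
  have hmain := hb Xs y v' hXsX hyY hne' hXsz hyz hsecant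
  obtain ⟨J, hJ⟩ := Metric.tendsto_atTop.1 hmain (ε / 3) (by linarith)
  have h1 := hJ J le_rfl
  rw [Real.dist_0_eq_abs, abs_of_nonneg Metric.infDist_nonneg] at h1
  exact absurd (hv'd (msel J)) (not_le.2 h1)
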